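/- If a component C of a residual graph is a path P3 with both leaves blue and center green, then the total weight of C is 4 and exactly one more legal move must be played in C to totally dominate all vertices of C, and that move decreases the weight of C by exactly 4. -/

import Mathlib

open SimpleGraph Finset

inductive GameColor | white | green | blue | red
deriving DecidableEq

def GameColor.weight : GameColor → ℕ
  | white => 3
  | green => 2
  | blue => 1
  | red => 0

variable {V : Type} [Fintype V] [DecidableEq V]

/-- The set of vertices totally dominated by the played set `D`. -/
def totDom (G : SimpleGraph V) [DecidableRel G.Adj] (D : Finset V) : Finset V :=
  Finset.univ.filter fun u => ∃ v ∈ D, G.Adj u v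

/-- A vertex `v` is a legal move if playing it totally dominates a new vertex. -/
def isLegal (G : SimpleGraph V) [DecidableRel G.Adj] (D : Finset V) (v : V) : Prop :=
  ∃ u, G.Adj v u ∧ u ∉ totDom G D

instance (G : SimpleGraph V) [DecidableRel G.Adj] (D : Finset V) :
    DecidablePred (isLegal G D) := fun v =>
  decidable_of_iff (∃ u, G.Adj v u ∧ u ∉ totDom G D) Iff.rfl

/-- The color of a vertex in the partially total dominated graph with played set `D`. -/
def colorOf (G : SimpleGraph V) [DecidableRel G.Adj] (D : Finset V) (v : V) : GameColor :=
  if v ∈ totDom G D then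
    (if isLegal G D v then .blue else .red)
  else (if v ∈ D then .green else .white)

/-- The total weight of the colored graph. -/
def totalWeight (G : SimpleGraph V) [DecidableRel G.Adj] (D : Finset V) : ℕ :=
  ∑ v, (colorOf G D v).weight

/-- The residualGraph graph: delete red vertices and blue–blue edges. -/
def residualGraph (G : SimpleGraph V) [DecidableRel G.Adj] (D : Finset V) : SimpleGraph V where
  Adj u w := G.Adj u w ∧ colorOf G D u ≠ .red ∧ colorOf G D w ≠ .red ∧
      ¬(colorOf G D u = .blue ∧ colorOf G D w = .blue)
  symm := ⟨fun u w ⟨h, a, b, c⟩ => ⟨h.symm, b, a, fun ⟨x, y⟩ => c ⟨y, x⟩⟩⟩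
  loopless := ⟨fun u ⟨h, _⟩ => G.loopless.irrefl u h⟩

instance (G : SimpleGraph V) [DecidableRel G.Adj] (D : Finset V) :
    DecidableRel (residualGraph G D).Adj := fun u w =>
  decidable_of_iff (G.Adj u w ∧ colorOf G D u ≠ .red ∧ colorOf G D w ≠ .red ∧
      ¬(colorOf G D u = .blue ∧ colorOf G D w = .blue)) Iff.rfl

def legalMoves (G : SimpleGraph V) [DecidableRel G.Adj] (D : Finset V) : Finset V :=
  Finset.univ.filter (isLegal G D)

/-- The value of the total domination game from position `D` with `fuel` moves allowed,
where `isDom = true` when it is Dominator's turn (Dominator minimizes, Staller maximizes).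
Since each legal move totally dominates a new vertex, fuel `Fintype.card V` always suffices. -/
def gameVal (G : SimpleGraph V) [DecidableRel G.Adj] : Bool → ℕ → Finset V → ℕ
  | _, 0, _ => 0
  | isDom, n + 1, D =>
    if h : (legalMoves G D).Nonempty then
      if isDom then 1 + (legalMoves G D).inf' h fun v => gameVal G false n (insert v D)
      else 1 + (legalMoves G D).sup' h fun v => gameVal G true n (insert v D)
    else 0

/-- The game total domination number `γ_tg(G)`: Dominator starts, both play optimally. -/
def gtd (G : SimpleGraph V) [DecidableRel G.Adj] : ℕ :=
  gameVal G true (Fintype.card V) ∅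

/-! The centre `g` is not a legal move, since its residual neighbours are the two blue leaves,
which are already totally dominated. So the move is a leaf, and it dominates `g`. An edge of `G`
missing from the residual graph always ends at a vertex that is already totally dominated, so
afterwards no vertex of the component has an undominated neighbour: all three turn red. -/

section

variable {G : SimpleGraph V} [DecidableRel G.Adj] {D D' : Finset V} {x u : V}

omit [DecidableEq V] in
lemma mem_totDom : u ∈ totDom G D ↔ ∃ v ∈ D, G.Adj u v := by
  simp [totDom]

omit [DecidableEq V] in
lemma totDom_mono (h : D ⊆ D') : totDom G D ⊆ totDom G D' := fun _ hu => by
  obtain ⟨v, hv, huv⟩ := mem_totDom.1 hu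
  exact mem_totDom.2 ⟨v, h hv, huv⟩

lemma not_isLegal_iff : ¬ isLegal G D x ↔ ∀ u, G.Adj x u → u ∈ totDom G D := by
  simp [isLegal]

lemma colorOf_eq_blue : colorOf G D x = .blue ↔ x ∈ totDom G D ∧ isLegal G D x := by
  unfold colorOf; split_ifs <;> simp_all

lemma colorOf_eq_red : colorOf G D x = .red ↔ x ∈ totDom G D ∧ ¬ isLegal G D x := by
  unfold colorOf; split_ifs <;> simp_all

lemma residualGraph_le : residualGraph G D ≤ G := fun _ _ h => h.1

lemma mem_residual_neighborFinset_or_mem_totDom (hx : colorOf G D x ≠ .red) (hxu : G.Adj x u) :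
    u ∈ (residualGraph G D).neighborFinset x ∨ u ∈ totDom G D := by
  by_cases hu : colorOf G D u = .red
  · exact .inr (colorOf_eq_red.1 hu).1
  by_cases hblue : colorOf G D x = .blue ∧ colorOf G D u = .blue
  · exact .inr (colorOf_eq_blue.1 hblue.2).1
  · exact .inl ((mem_neighborFinset _ _ _).2 ⟨hxu, hx, hu, hblue⟩)

lemma not_isLegal_of_residual_neighbors (hx : colorOf G D x ≠ .red) (hDD' : D ⊆ D')
    (hN : ∀ u ∈ (residualGraph G D).neighborFinset x, u ∈ totDom G D') :
    ¬ isLegal G D' x :=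
  not_isLegal_iff.2 fun _ hxu =>
    (mem_residual_neighborFinset_or_mem_totDom hx hxu).elim (hN _) (totDom_mono hDD' ·)

lemma colorOf_eq_red_of_residual_neighbors (hx : colorOf G D x ≠ .red) (hDD' : D ⊆ D')
    (hxD' : x ∈ totDom G D') (hN : ∀ u ∈ (residualGraph G D).neighborFinset x, u ∈ totDom G D') :
    colorOf G D' x = .red :=
  colorOf_eq_red.2 ⟨hxD', not_isLegal_of_residual_neighbors hx hDD' hN⟩

end

/-- If a component `C` of the residual graph is a `P3` with blue leaves and
green center, then `C` has total weight 4 and exactly one more legal move in `C` totally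
dominates `C`, and that move decreases the weight of `C` by exactly 4. -/
theorem stmt9 (G : SimpleGraph V) [DecidableRel G.Adj] (D : Finset V)
    (b1 g b2 : V)
    (hcard : ({b1, g, b2} : Finset V).card = 3)
    (hc1 : colorOf G D b1 = .blue) (hc2 : colorOf G D g = .green)
    (hc3 : colorOf G D b2 = .blue)
    (hn1 : (residualGraph G D).neighborFinset b1 = {g})
    (hn2 : (residualGraph G D).neighborFinset g = {b1, b2})
    (hn3 : (residualGraph G D).neighborFinset b2 = {g}) :
    (∑ x ∈ ({b1, g, b2} : Finset V), (colorOf G D x).weight) = 4 ∧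
    (∃ v ∈ ({b1, g, b2} : Finset V), isLegal G D v) ∧
    (∀ v ∈ ({b1, g, b2} : Finset V), isLegal G D v →
      ({b1, g, b2} : Finset V) ⊆ totDom G (insert v D) ∧
      (∑ x ∈ ({b1, g, b2} : Finset V), (colorOf G (insert v D) x).weight) + 4 =
        (∑ x ∈ ({b1, g, b2} : Finset V), (colorOf G D x).weight)) := by
  have hb1 := colorOf_eq_blue.1 hc1
  have hb2 := colorOf_eq_blue.1 hc3
  obtain ⟨hb1g, hb1b2, hgb2⟩ := card_triple_eq_three_iff.1 hcard
  have hsum : ∀ D' : Finset V, ∑ x ∈ ({b1, g, b2} : Finset V), (colorOf G D' x).weight =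
      (colorOf G D' b1).weight + (colorOf G D' g).weight + (colorOf G D' b2).weight := by
    intro D'
    rw [sum_insert (by simp [hb1g, hb1b2]), sum_pair hgb2, add_assoc]
  have hg_illegal : ¬ isLegal G D g :=
    not_isLegal_of_residual_neighbors (by simp [hc2]) subset_rfl (by simp [hn2, hb1.1, hb2.1])
  refine ⟨by rw [hsum, hc1, hc2, hc3]; rfl, ⟨b1, by simp, hb1.2⟩, fun v hv hlegal => ?_⟩
  have hD : D ⊆ insert v D := subset_insert v D
  have hg : g ∈ totDom G (insert v D) := by
    have hvg : v ≠ g := fun h => hg_illegal (h ▸ hlegal)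
    have hv' : v ∈ (residualGraph G D).neighborFinset g := by
      rw [hn2]
      simp only [mem_insert, mem_singleton] at hv ⊢
      tauto
    exact mem_totDom.2
      ⟨v, mem_insert_self v D, residualGraph_le ((mem_neighborFinset _ _ _).1 hv')⟩
  have hb1' := totDom_mono hD hb1.1
  have hb2' := totDom_mono hD hb2.1
  have hred : ∀ x ∈ ({b1, g, b2} : Finset V), colorOf G (insert v D) x = .red := by
    simp only [mem_insert, mem_singleton, forall_eq_or_imp, forall_eq]
    exact ⟨colorOf_eq_red_of_residual_neighbors (by simp [hc1]) hD hb1' (by simp [hn1, hg]),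
      colorOf_eq_red_of_residual_neighbors (by simp [hc2]) hD hg (by simp [hn2, hb1', hb2']),
      colorOf_eq_red_of_residual_neighbors (by simp [hc3]) hD hb2' (by simp [hn3, hg])⟩
  refine ⟨by simp [insert_subset_iff, hb1', hg, hb2'], ?_⟩
  rw [sum_eq_zero fun x hx => by rw [hred x hx]; rfl, hsum, hc1, hc2, hc3]
  rfl
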